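/- (Main triangle inequality for the D-feature distance) Let Ω ⊆ ℝ be nonempty and bounded, and let s = sup{|x - y| : x, y ∈ Ω}. For F1, F2, F3 each consisting of a D-feature coordinate in Ω and an I-feature coordinate in ℝ, define c_{st} = min(|F_s^k - F_t^k|, 1) and g(F_s, F_t) = c_{st}·s + (1 - c_{st})·|F_s^j - F_t^j|. Then g(F1, F2) + g(F1, F3) ≥ g(F2, F3). -/

import Mathlib

/-!
Write `g = c s + (1 - c) d` with `c` the truncated I-distance and `d = |F^j - F'^j| ≤ s`. Since
`g = s - (1 - c)(s - d)`, it is increasing in `c` and, for `c ≤ 1`, in `d`; by the triangle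
inequalities for `c` and `d` we may therefore replace `(c₂₃, d₂₃)` by the sums
`(c₁₂ + c₁₃, d₁₂ + d₁₃)`. If `c₁₂ + c₁₃ ≥ 1` the left side is at most `s` while the right side is
at least `(c₁₂ + c₁₃) s`; otherwise the inequality splits into the two summands.
-/

/-- D-feature distance: `.1` is the D-feature coordinate (in Ω), `.2` the I-feature one. -/
def gD (s : ℝ) (F1 F2 : ℝ × ℝ) : ℝ :=
  min |F1.2 - F2.2| 1 * s + (1 - min |F1.2 - F2.2| 1) * |F1.1 - F2.1|

lemma min_le_min_add_min {a b c t : ℝ} (ht : 0 ≤ t) (h : a ≤ b + c) (hb : 0 ≤ b) (hc : 0 ≤ c) :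
    min a t ≤ min b t + min c t := by
  simp only [min_def]
  split_ifs <;> linarith

lemma abs_sub_le_sSup {Ω : Set ℝ} (hΩ : Bornology.IsBounded Ω) {x y : ℝ} (hx : x ∈ Ω)
    (hy : y ∈ Ω) : |x - y| ≤ sSup {d : ℝ | ∃ x ∈ Ω, ∃ y ∈ Ω, d = |x - y|} := by
  obtain ⟨C, hC⟩ := Metric.isBounded_iff.mp hΩ
  refine le_csSup ⟨C, ?_⟩ ⟨x, hx, y, hy, rfl⟩
  rintro _ ⟨x, hx, y, hy, rfl⟩
  exact hC hx hy

def blend (s c d : ℝ) : ℝ := c * s + (1 - c) * d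

lemma gD_eq_blend (s : ℝ) (F G : ℝ × ℝ) :
    gD s F G = blend s (min |F.2 - G.2| 1) |F.1 - G.1| := rfl

section blend

variable {s a b c x y z : ℝ}

lemma blend_mono_left (hz : z ≤ s) (h : c ≤ a) : blend s c z ≤ blend s a z := by
  unfold blend; nlinarith

lemma blend_mono_right (hc : c ≤ 1) (h : z ≤ x) : blend s c z ≤ blend s c x := by
  unfold blend; nlinarith

lemma blend_le (hc : c ≤ 1) (hz : z ≤ s) : blend s c z ≤ s := by
  unfold blend; nlinarith

lemma mul_le_blend (hc : c ≤ 1) (hz : 0 ≤ z) : c * s ≤ blend s c z := by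
  unfold blend; nlinarith

lemma blend_add_add_le (ha : 0 ≤ a) (hb : 0 ≤ b) (hx : 0 ≤ x) (hy : 0 ≤ y) :
    blend s (a + b) (x + y) ≤ blend s a x + blend s b y := by
  unfold blend; nlinarith [mul_nonneg ha hy, mul_nonneg hb hx]

lemma blend_le_add_blend (hs : 0 ≤ s) (ha₀ : 0 ≤ a) (ha₁ : a ≤ 1) (hb₀ : 0 ≤ b) (hb₁ : b ≤ 1)
    (hc₁ : c ≤ 1) (hx : 0 ≤ x) (hy : 0 ≤ y) (hz : z ≤ s)
    (hcab : c ≤ a + b) (hzxy : z ≤ x + y) :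
    blend s c z ≤ blend s a x + blend s b y := by
  rcases le_total (a + b) 1 with hab | hab
  · calc blend s c z ≤ blend s (a + b) z := blend_mono_left hz hcab
      _ ≤ blend s (a + b) (x + y) := blend_mono_right hab hzxy
      _ ≤ blend s a x + blend s b y := blend_add_add_le ha₀ hb₀ hx hy
  · calc blend s c z ≤ s := blend_le hc₁ hz
      _ ≤ a * s + b * s := by nlinarith
      _ ≤ blend s a x + blend s b y := add_le_add (mul_le_blend ha₁ hx) (mul_le_blend hb₁ hy)

end blend

theorem stmt_3_general (Ω : Set ℝ) (hbdd : Bornology.IsBounded Ω)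
    (s : ℝ) (hs : s = sSup {d : ℝ | ∃ x ∈ Ω, ∃ y ∈ Ω, d = |x - y|})
    (F1 F2 F3 : ℝ × ℝ) (h1 : F1.1 ∈ Ω) (h2 : F2.1 ∈ Ω) (h3 : F3.1 ∈ Ω) :
    gD s F2 F3 ≤ gD s F1 F2 + gD s F1 F3 := by
  have hΩ : ∀ x ∈ Ω, ∀ y ∈ Ω, |x - y| ≤ s := fun x hx y hy => hs ▸ abs_sub_le_sSup hbdd hx hy
  have htri (u v w : ℝ) : |v - w| ≤ |u - v| + |u - w| := dist_triangle_left v w u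
  simp only [gD_eq_blend]
  refine blend_le_add_blend ((abs_nonneg _).trans (hΩ _ h1 _ h1)) (by positivity) (min_le_right _ _)
    (by positivity) (min_le_right _ _) (min_le_right _ _) (abs_nonneg _) (abs_nonneg _)
    (hΩ _ h2 _ h3) (min_le_min_add_min zero_le_one (htri ..) (abs_nonneg _) (abs_nonneg _))
    (htri ..)

/-- main triangle inequality for the D-feature distance. -/
theorem stmt_3 (Ω : Set ℝ) (hne : Ω.Nonempty) (hbdd : Bornology.IsBounded Ω)
    (s : ℝ) (hs : s = sSup {d : ℝ | ∃ x ∈ Ω, ∃ y ∈ Ω, d = |x - y|})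
    (F1 F2 F3 : ℝ × ℝ) (h1 : F1.1 ∈ Ω) (h2 : F2.1 ∈ Ω) (h3 : F3.1 ∈ Ω) :
    gD s F2 F3 ≤ gD s F1 F2 + gD s F1 F3 :=
  stmt_3_general Ω hbdd s hs F1 F2 F3 h1 h2 h3
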